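/- arXiv:2205.09492 — 7 statements merged into one kernel-verified Lean document; each statement's English description precedes it below -/
import Mathlib

section
/- The limit as n → ∞ of the product for k = 1 to 2n+1 of (1 + 2/k)^(k·(-1)^(k+1)) equals πe/2. -/
open Filter Real Topology Finset

noncomputable def catalanG : ℝ := ∑' n : ℕ, (-1 : ℝ) ^ n / (2 * n + 1) ^ 2

noncomputable def zeta3 : ℝ := ∑' n : ℕ, (1 : ℝ) / (n + 1) ^ 3

/-- Kurokawa double sine (Hölder's function). -/
noncomputable def S2 (z : ℝ) : ℝ :=
  Real.exp z * ∏' n : ℕ, (((1 - z / (n + 1)) / (1 + z / (n + 1))) ^ (n + 1) * Real.exp (2 * z))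

/-- Kurokawa triple sine. -/
noncomputable def S3 (x : ℝ) : ℝ :=
  Real.exp (x ^ 2 / 2) * ∏' n : ℕ, (Real.exp (x ^ 2) * (1 - x ^ 2 / (n + 1) ^ 2) ^ ((n + 1) ^ 2))

/-- Kurokawa triple cosine. -/
noncomputable def C3 (x : ℝ) : ℝ :=
  ∏' n : ℕ, (Real.exp (x ^ 2) * (1 - 4 * x ^ 2 / (2 * n + 1) ^ 2) ^ (((2 * (n : ℝ) + 1) ^ 2) / 4))

/-- Partial Borwein–Dykshoorn product up to `2 n + 1`. -/
noncomputable def Dn (x : ℝ) (n : ℕ) : ℝ :=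
  ∏ k ∈ Finset.Icc 1 (2 * n + 1), (1 + x / k) ^ ((k : ℤ) * (-1) ^ (k + 1))

/-- Partial Adamchik product up to `2 N`. -/
noncomputable def En (x : ℝ) (N : ℕ) : ℝ :=
  ∏ k ∈ Finset.Icc 1 (2 * N), (Real.exp (4 * x ^ 2) * (1 - 4 * x ^ 2 / k ^ 2) ^ (k ^ 2)) ^ ((-1 : ℤ) ^ (k + 1))

/-! The factors telescope: pairing `k = 2i + 2` with `k = 2i + 3`, the partial product up to
`2n + 1` is the Wallis partial product `W (n + 1)` times `(1 + 1/(2n+2))^(2n+2)`. These tend to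
`π / 2` and `e` respectively. -/

open Real.Wallis

lemma Dn_succ (x : ℝ) (n : ℕ) :
    Dn x (n + 1) =
      Dn x n * (1 + x / (2 * n + 3)) ^ (2 * n + 3) / (1 + x / (2 * n + 2)) ^ (2 * n + 2) := by
  have h_even : ((2 * n + 2 : ℕ) : ℤ) * (-1) ^ (2 * n + 2 + 1) = -(2 * n + 2 : ℕ) := by
    rw [Odd.neg_one_pow ⟨n + 1, by ring⟩, mul_neg_one]
  have h_odd : ((2 * n + 3 : ℕ) : ℤ) * (-1) ^ (2 * n + 3 + 1) = (2 * n + 3 : ℕ) := by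
    rw [Even.neg_one_pow ⟨n + 2, by ring⟩, mul_one]
  rw [Dn, Dn, show 2 * (n + 1) + 1 = 2 * n + 1 + 1 + 1 by ring,
    prod_Icc_succ_top (by omega), prod_Icc_succ_top (by omega), h_even, h_odd,
    zpow_neg, zpow_natCast, zpow_natCast, div_eq_mul_inv, mul_right_comm]
  push_cast
  ring

lemma Dn_two_eq (n : ℕ) : Dn 2 n = W (n + 1) * (1 + 1 / (2 * n + 2 : ℝ)) ^ (2 * n + 2) := by
  induction n with
  | zero => norm_num [Dn, W]
  | succ n ih =>
    rw [Dn_succ, ih, W_succ (n + 1)]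
    push_cast
    rw [one_add_div, one_add_div, one_add_div, one_add_div, div_pow, div_pow, div_pow, div_pow]
    · field_simp
      ring
    all_goals positivity

theorem melzak_product :
    Tendsto (fun n : ℕ => ∏ k ∈ Finset.Icc 1 (2 * n + 1),
      ((1 + 2 / (k : ℝ)) ^ ((k : ℤ) * (-1) ^ (k + 1))))
      atTop (𝓝 (π * Real.exp 1 / 2)) := by
  have h_wallis : Tendsto (fun n ↦ W (n + 1)) atTop (𝓝 (π / 2)) :=
    tendsto_W_nhds_pi_div_two.comp (tendsto_add_atTop_nat 1)
  have h_exp : Tendsto (fun n : ℕ ↦ (1 + 1 / ((2 * n + 2 : ℕ) : ℝ)) ^ (2 * n + 2)) atTop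
      (𝓝 (Real.exp 1)) :=
    (tendsto_one_add_div_pow_exp 1).comp
      (tendsto_atTop_mono (fun n ↦ show n ≤ 2 * n + 2 by omega) tendsto_id)
  change Tendsto (Dn 2) atTop _
  push_cast at h_exp
  simpa only [funext Dn_two_eq, mul_div_right_comm] using h_wallis.mul h_exp
end

section
/- For real x with |x| < 1/2, E(x) = e^(2x²) · S₃(2x) / S₃(x)⁸, where E is the Adamchik function and S₃ is the Kurokawa triple sine function. -/
open Filter Real Topology Finset

/-!
With `T y n := exp (y²) (1 - y²/(n+1)²)^((n+1)²)` the `n`-th factor of `S₃(y)`, the `k`-th factor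
of the Adamchik product is `T (2x) (k-1)`, and for even `k = 2(n+1)` it is also `T x n ^ 4`.
Hence the partial product up to `2N` is `∏_{i<2N} T (2x) i / (∏_{i<N} T x i)^8`, and both partial
products converge, the second to a nonzero limit: for `y² < 1`, `log T y n = O(1/n²)` by the bound
`|t + log (1 - t)| ≤ t²/(1 - t)`. The Gaussian prefactors of `S₃` cancel.
-/

noncomputable def tripleSineFactor (y : ℝ) (n : ℕ) : ℝ :=
  Real.exp (y ^ 2) * (1 - y ^ 2 / (n + 1) ^ 2) ^ ((n + 1) ^ 2)

theorem S3_eq_exp_mul_tprod (y : ℝ) :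
    S3 y = Real.exp (y ^ 2 / 2) * ∏' n, tripleSineFactor y n :=
  rfl

section Convergence

variable {y : ℝ}

theorem tripleSineFactor_pos (hy : y ^ 2 < 1) (n : ℕ) : 0 < tripleSineFactor y n := by
  have hc : (1 : ℝ) ≤ ((n : ℝ) + 1) ^ 2 := one_le_pow₀ (by linarith [n.cast_nonneg (α := ℝ)])
  have : y ^ 2 / ((n : ℝ) + 1) ^ 2 < 1 := (div_le_self (sq_nonneg y) hc).trans_lt hy
  exact mul_pos (exp_pos _) (pow_pos (by linarith) _)

theorem abs_log_tripleSineFactor_le (hy : y ^ 2 < 1) (n : ℕ) :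
    |log (tripleSineFactor y n)| ≤ y ^ 4 / (1 - y ^ 2) / ((n : ℝ) + 1) ^ 2 := by
  set c : ℝ := ((n : ℝ) + 1) ^ 2
  set t : ℝ := y ^ 2 / c with ht_def
  have hc : 1 ≤ c := one_le_pow₀ (by linarith [n.cast_nonneg (α := ℝ)])
  have ht0 : 0 ≤ t := by positivity
  have hty : t ≤ y ^ 2 := div_le_self (sq_nonneg y) hc
  have hlog : log (tripleSineFactor y n) = c * (t + log (1 - t)) := by
    rw [tripleSineFactor, log_mul (exp_ne_zero _) (pow_ne_zero _ (by linarith)), log_exp,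
      log_pow]
    have : c * t = y ^ 2 := by rw [ht_def]; field_simp
    push_cast
    linear_combination -this
  have htaylor : |t + log (1 - t)| ≤ t ^ 2 / (1 - t) := by
    have h := abs_log_sub_add_sum_range_le (x := t) (by rw [abs_of_nonneg ht0]; linarith) 1
    norm_num [abs_of_nonneg ht0] at h
    exact h
  calc |log (tripleSineFactor y n)| = c * |t + log (1 - t)| := by
        rw [hlog, abs_mul, abs_of_pos (by linarith)]
    _ ≤ c * (t ^ 2 / (1 - y ^ 2)) := by
        gcongr
        exact htaylor.trans (div_le_div_of_nonneg_left (sq_nonneg t) (by linarith) (by linarith))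
    _ = y ^ 4 / (1 - y ^ 2) / c := by rw [ht_def]; field_simp

theorem summable_log_tripleSineFactor (hy : y ^ 2 < 1) :
    Summable fun n => log (tripleSineFactor y n) := by
  have hsq : Summable fun n : ℕ => y ^ 4 / (1 - y ^ 2) / ((n : ℝ) + 1) ^ 2 := by
    refine (((summable_nat_add_iff 1).mpr
      (Real.summable_one_div_nat_pow.mpr one_lt_two)).mul_left (y ^ 4 / (1 - y ^ 2))).congr
      fun n => ?_
    push_cast
    ring
  exact .of_norm_bounded hsq (abs_log_tripleSineFactor_le hy)

theorem multipliable_tripleSineFactor (hy : y ^ 2 < 1) : Multipliable (tripleSineFactor y) :=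
  Real.multipliable_of_summable_log (tripleSineFactor_pos hy) (summable_log_tripleSineFactor hy)

theorem tendsto_prod_range_tripleSineFactor (hy : y ^ 2 < 1) :
    Tendsto (fun N => ∏ i ∈ range N, tripleSineFactor y i) atTop
      (𝓝 (∏' n, tripleSineFactor y n)) :=
  (multipliable_tripleSineFactor hy).hasProd.tendsto_prod_nat

theorem tprod_tripleSineFactor_ne_zero (hy : y ^ 2 < 1) : ∏' n, tripleSineFactor y n ≠ 0 := by
  rw [← Real.rexp_tsum_eq_tprod (tripleSineFactor_pos hy) (summable_log_tripleSineFactor hy)]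
  exact exp_ne_zero _

end Convergence

theorem prod_Icc_one_two_mul_zpow_neg_one_pow {G : Type*} [DivisionCommMonoid G] (f : ℕ → G)
    (N : ℕ) :
    ∏ k ∈ Icc 1 (2 * N), f k ^ ((-1 : ℤ) ^ (k + 1)) =
      ∏ i ∈ range N, f (2 * i + 1) / f (2 * i + 2) := by
  induction N with
  | zero => simp
  | succ N ih =>
    rw [show 2 * (N + 1) = 2 * N + 1 + 1 by ring, prod_Icc_succ_top (by omega),
      prod_Icc_succ_top (by omega), ih, prod_range_succ, Even.neg_one_pow ⟨N + 1, by ring⟩,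
      Odd.neg_one_pow ⟨N + 1, by ring⟩, zpow_one, zpow_neg_one, mul_assoc, div_eq_mul_inv]

theorem prod_range_two_mul {M : Type*} [CommMonoid M] (f : ℕ → M) (N : ℕ) :
    ∏ i ∈ range (2 * N), f i = ∏ i ∈ range N, f (2 * i) * f (2 * i + 1) := by
  induction N with
  | zero => simp
  | succ N ih =>
    rw [show 2 * (N + 1) = 2 * N + 1 + 1 by ring, prod_range_succ, prod_range_succ, ih,
      prod_range_succ, mul_assoc]

theorem tripleSineFactor_two_mul (x : ℝ) (n : ℕ) :
    tripleSineFactor (2 * x) n =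
      Real.exp (4 * x ^ 2) * (1 - 4 * x ^ 2 / ((n + 1 : ℕ) : ℝ) ^ 2) ^ ((n + 1) ^ 2) := by
  rw [tripleSineFactor, mul_pow]
  norm_num

theorem tripleSineFactor_two_mul_odd (x : ℝ) (n : ℕ) :
    tripleSineFactor (2 * x) (2 * n + 1) = tripleSineFactor x n ^ 4 := by
  rw [tripleSineFactor_two_mul, tripleSineFactor, mul_pow, ← exp_nat_mul, ← pow_mul,
    show (2 * n + 1 + 1) ^ 2 = (n + 1) ^ 2 * 4 by ring]
  congr 2
  push_cast
  field_simp
  ring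

theorem En_eq_prod_range_div (x : ℝ) (N : ℕ) :
    En x N = (∏ i ∈ range (2 * N), tripleSineFactor (2 * x) i) /
      (∏ i ∈ range N, tripleSineFactor x i) ^ 8 := by
  rw [En, prod_Icc_one_two_mul_zpow_neg_one_pow, prod_range_two_mul, ← prod_pow,
    ← prod_div_distrib]
  refine prod_congr rfl fun i _ => ?_
  have heven : Real.exp (4 * x ^ 2) *
      (1 - 4 * x ^ 2 / ((2 * i + 2 : ℕ) : ℝ) ^ 2) ^ ((2 * i + 2) ^ 2) =
        tripleSineFactor x i ^ 4 := by
    rw [← tripleSineFactor_two_mul_odd, tripleSineFactor_two_mul]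
  rw [heven, ← tripleSineFactor_two_mul, tripleSineFactor_two_mul_odd]
  rcases eq_or_ne (tripleSineFactor x i) 0 with h | h
  · simp [h]
  · field_simp

theorem adamchik_E_eq_S3 (x : ℝ) (hx : |x| < 1 / 2) :
    Tendsto (En x) atTop (𝓝 (Real.exp (2 * x ^ 2) * S3 (2 * x) / (S3 x) ^ 8)) := by
  have h2x : (2 * x) ^ 2 < 1 := by nlinarith [sq_abs x, abs_nonneg x]
  have hx1 : x ^ 2 < 1 := by nlinarith
  have hS3 : Real.exp (2 * x ^ 2) * S3 (2 * x) / (S3 x) ^ 8 =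
      (∏' n, tripleSineFactor (2 * x) n) / (∏' n, tripleSineFactor x n) ^ 8 := by
    have hexp : Real.exp (2 * x ^ 2) * Real.exp ((2 * x) ^ 2 / 2) = Real.exp (x ^ 2 / 2) ^ 8 := by
      rw [← exp_add, ← exp_nat_mul]
      ring_nf
    rw [S3_eq_exp_mul_tprod, S3_eq_exp_mul_tprod, ← mul_assoc, hexp, mul_pow,
      mul_div_mul_left _ _ (pow_ne_zero _ (exp_ne_zero _))]
  rw [hS3, funext (En_eq_prod_range_div x)]
  exact ((tendsto_prod_range_tripleSineFactor h2x).comp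
    (tendsto_atTop_mono (fun N => show N ≤ 2 * N by omega) tendsto_id)).div
    ((tendsto_prod_range_tripleSineFactor hx1).pow 8)
    (pow_ne_zero _ (tprod_tripleSineFactor_ne_zero hx1))
end

section
/- For real x with |x| < 1/2, S₃(2x) = S₃(x)⁴ · C₃(x)⁴, where S₃ is the Kurokawa triple sine and C₃ the Kurokawa triple cosine function. -/
open Filter Real Topology Finset

/-!
Both `S₃` and `C₃` are products of factors `e^c (1 - c/d)^d` with `c = x²`: for `S₃` the
`d` run through the squares `n²`, for `C₃` through the quarter odd squares `(2n-1)²/4`.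
Replacing `x` by `2x` multiplies `c` by `4`, and `e^{4c} (1 - 4c/4d)^{4d} = (e^c (1 - c/d)^d)⁴`.
So the factor of `S₃(2x)` at an even `n = 2m` is the fourth power of the factor of `S₃(x)` at `m`,
and at an odd `n = 2m - 1` it is the fourth power of the factor of `C₃(x)` at `m`; splitting the
convergent product into its even and odd parts gives the identity.
-/

noncomputable def tripleFactor (c d : ℝ) : ℝ := exp c * (1 - c / d) ^ d

lemma tripleFactor_four_mul {c d : ℝ} (h : 0 ≤ 1 - c / d) :
    tripleFactor (4 * c) (4 * d) = tripleFactor c d ^ 4 := by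
  have hexp : exp (4 * c) = exp c ^ 4 := by rw [← exp_nat_mul]; norm_num
  have hpow : (1 - c / d) ^ (4 * d) = ((1 - c / d) ^ d) ^ 4 := by
    rw [mul_comm, ← rpow_mul_natCast h]; norm_num
  rw [tripleFactor, tripleFactor, mul_div_mul_left _ _ four_ne_zero, hexp, hpow, mul_pow]

lemma S3_eq_tprod_tripleFactor (x : ℝ) :
    S3 x = exp (x ^ 2 / 2) * ∏' n : ℕ, tripleFactor (x ^ 2) (((n : ℝ) + 1) ^ 2) := by
  unfold S3 tripleFactor
  congr! with n
  rw [← rpow_natCast]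
  push_cast
  rfl

lemma C3_eq_tprod_tripleFactor (x : ℝ) :
    C3 x = ∏' n : ℕ, tripleFactor (x ^ 2) ((2 * (n : ℝ) + 1) ^ 2 / 4) := by
  unfold C3 tripleFactor
  congr! 4 with n
  rw [div_div_eq_mul_div, mul_comm]

lemma abs_add_log_one_sub_le {t : ℝ} (h0 : 0 ≤ t) (h1 : t < 1) :
    |t + log (1 - t)| ≤ t ^ 2 / (1 - t) := by
  have := abs_log_sub_add_sum_range_le (x := t) (by rwa [abs_of_nonneg h0]) 1
  simpa [abs_of_nonneg h0, sq] using this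

section Convergence

variable {ι : Type*} {c T : ℝ} {d : ι → ℝ}

lemma summable_add_mul_log_one_sub_div (hc : 0 ≤ c) (hT : T < 1) (hd : ∀ i, 0 < d i)
    (hcd : ∀ i, c / d i ≤ T) (hsum : Summable fun i => (d i)⁻¹) :
    Summable fun i => c + d i * log (1 - c / d i) := by
  refine Summable.of_norm_bounded (hsum.mul_left (c ^ 2 / (1 - T))) fun i => ?_
  have hdi := hd i
  have ht0 : 0 ≤ c / d i := div_nonneg hc hdi.le
  have ht1 : c / d i < 1 := (hcd i).trans_lt hT
  calc ‖c + d i * log (1 - c / d i)‖ = ‖d i * (c / d i + log (1 - c / d i))‖ := by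
        rw [mul_add, mul_div_cancel₀ _ hdi.ne']
    _ = d i * |c / d i + log (1 - c / d i)| := by
        rw [norm_mul, Real.norm_of_nonneg hdi.le, Real.norm_eq_abs]
    _ ≤ d i * ((c / d i) ^ 2 / (1 - T)) := by
        gcongr
        exact (abs_add_log_one_sub_le ht0 ht1).trans
          (div_le_div_of_nonneg_left (sq_nonneg _) (by linarith) (by linarith [hcd i]))
    _ = c ^ 2 / (1 - T) * (d i)⁻¹ := by field_simp

lemma multipliable_tripleFactor (hc : 0 ≤ c) (hT : T < 1) (hd : ∀ i, 0 < d i)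
    (hcd : ∀ i, c / d i ≤ T) (hsum : Summable fun i => (d i)⁻¹) :
    Multipliable fun i => tripleFactor c (d i) := by
  have hbase : ∀ i, 0 < 1 - c / d i := fun i => by linarith [hcd i]
  refine multipliable_of_summable_log
    (fun i => mul_pos (exp_pos _) (rpow_pos_of_pos (hbase i) _)) ?_
  refine (summable_add_mul_log_one_sub_div hc hT hd hcd hsum).congr fun i => ?_
  rw [tripleFactor, log_mul (exp_ne_zero _) (rpow_pos_of_pos (hbase i) _).ne', log_exp,
    log_rpow (hbase i)]

end Convergence

lemma summable_inv_nat_add_sq {a : ℝ} (ha : 0 ≤ a) :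
    Summable fun n : ℕ => (((n : ℝ) + a) ^ 2)⁻¹ := by
  refine ((summable_one_div_nat_add_rpow a 2).mpr one_lt_two).congr fun n => ?_
  rw [abs_of_nonneg (by positivity), rpow_two, one_div]

lemma div_nat_succ_sq_le {c : ℝ} (hc : 0 ≤ c) (n : ℕ) : c / ((n : ℝ) + 1) ^ 2 ≤ c :=
  div_le_self hc (one_le_pow₀ (by linarith [n.cast_nonneg (α := ℝ)]))

lemma div_odd_sq_div_four_le {c : ℝ} (hc : 0 ≤ c) (n : ℕ) :
    c / ((2 * (n : ℝ) + 1) ^ 2 / 4) ≤ 4 * c := by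
  rw [div_div_eq_mul_div, mul_comm]
  exact div_le_self (by positivity) (one_le_pow₀ (by linarith [n.cast_nonneg (α := ℝ)]))

lemma multipliable_tripleFactor_nat_succ_sq {c : ℝ} (hc : 0 ≤ c) (hc1 : c < 1) :
    Multipliable fun n : ℕ => tripleFactor c (((n : ℝ) + 1) ^ 2) :=
  multipliable_tripleFactor hc hc1 (fun _ => by positivity) (div_nat_succ_sq_le hc)
    (summable_inv_nat_add_sq zero_le_one)

lemma multipliable_tripleFactor_odd_sq_div_four {c : ℝ} (hc : 0 ≤ c) (hc1 : 4 * c < 1) :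
    Multipliable fun n : ℕ => tripleFactor c ((2 * (n : ℝ) + 1) ^ 2 / 4) := by
  refine multipliable_tripleFactor hc hc1 (fun _ => by positivity) (div_odd_sq_div_four_le hc)
    ((summable_inv_nat_add_sq (a := 1 / 2) (by norm_num)).congr fun n => ?_)
  ring

theorem S3_duplication (x : ℝ) (hx : |x| < 1 / 2) :
    S3 (2 * x) = (S3 x) ^ 4 * (C3 x) ^ 4 := by
  have hx0 : 0 ≤ x ^ 2 := sq_nonneg x
  have hx2 : 4 * x ^ 2 < 1 := by nlinarith [sq_abs x, abs_nonneg x]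
  set F : ℕ → ℝ := fun n => tripleFactor ((2 * x) ^ 2) (((n : ℝ) + 1) ^ 2)
  have heven : ∀ m : ℕ, F (2 * m) = tripleFactor (x ^ 2) ((2 * (m : ℝ) + 1) ^ 2 / 4) ^ 4 := by
    intro m
    rw [← tripleFactor_four_mul (by linarith [div_odd_sq_div_four_le hx0 m])]
    simp only [F]
    push_cast
    ring_nf
  have hodd : ∀ m : ℕ, F (2 * m + 1) = tripleFactor (x ^ 2) (((m : ℝ) + 1) ^ 2) ^ 4 := by
    intro m
    rw [← tripleFactor_four_mul (by linarith [div_nat_succ_sq_le hx0 m])]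
    simp only [F]
    push_cast
    ring_nf
  have hC := multipliable_tripleFactor_odd_sq_div_four hx0 hx2
  have hS := multipliable_tripleFactor_nat_succ_sq hx0 (by linarith)
  have hexp : exp ((2 * x) ^ 2 / 2) = exp (x ^ 2 / 2) ^ 4 := by rw [← exp_nat_mul]; ring_nf
  rw [S3_eq_tprod_tripleFactor, S3_eq_tprod_tripleFactor, C3_eq_tprod_tripleFactor, hexp,
    ← tprod_even_mul_odd (f := F) (by simpa only [heven] using hC.pow 4)
      (by simpa only [hodd] using hS.pow 4)]
  simp only [heven, hodd, hC.tprod_pow, hS.tprod_pow]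
  ring
end

section
/- For real x with |x| < 1/2, E(x) = e^(2x²) · C₃(x)⁸ / S₃(2x). -/
open Filter Real Topology Finset

/-!
Every factor of the three products is `exp (tripleLogFactor y c)` with `y = 4 x²` (or `x²`) and
`c` an integer, where `tripleLogFactor y c = y + c² log (1 - y / c²) = O(1 / c²)` by the Taylor
expansion of `log (1 - t)`. Taking logarithms, with `A` and `B` the sums of `tripleLogFactor (4 x²)`
over the odd and the even integers, one gets `log C₃(x) = A / 4`, `log S₃(2x) = 2x² + A + B`, and
the partial products `E_N` are the exponentials of the partial sums of `A - B`.
-/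

noncomputable def tripleLogFactor (y c : ℝ) : ℝ :=
  y + c ^ 2 * Real.log (1 - y / c ^ 2)

section TripleLogFactor

variable {y c : ℝ}

lemma one_sub_div_sq_pos (hy : y < 1) (hc : 1 ≤ c) : 0 < 1 - y / c ^ 2 := by
  have hc2 : 1 ≤ c ^ 2 := one_le_pow₀ hc
  rw [sub_pos, div_lt_one (by positivity)]
  linarith

lemma exp_tripleLogFactor_natCast {k : ℕ} (hb : 0 < 1 - y / (k : ℝ) ^ 2) :
    exp (tripleLogFactor y k) = exp y * (1 - y / (k : ℝ) ^ 2) ^ (k ^ 2) := by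
  rw [tripleLogFactor, exp_add, ← exp_log (pow_pos hb (k ^ 2)), log_pow]
  push_cast
  ring_nf

lemma abs_tripleLogFactor_le (hy0 : 0 ≤ y) (hy : y < 1) (hc : 1 ≤ c) :
    |tripleLogFactor y c| ≤ y ^ 2 / (1 - y) / c ^ 2 := by
  have hc2 : 1 ≤ c ^ 2 := one_le_pow₀ hc
  set t := y / c ^ 2 with ht
  have ht0 : 0 ≤ t := by positivity
  have hty : t ≤ y := div_le_self hy0 hc2
  have hlog : |t + Real.log (1 - t)| ≤ t ^ 2 / (1 - t) := by
    simpa [abs_of_nonneg ht0] using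
      Real.abs_log_sub_add_sum_range_le (show |t| < 1 by rw [abs_of_nonneg ht0]; linarith) 1
  have hsplit : tripleLogFactor y c = c ^ 2 * (t + Real.log (1 - t)) := by
    rw [tripleLogFactor, ht]
    field_simp
  calc |tripleLogFactor y c| = c ^ 2 * |t + Real.log (1 - t)| := by
        rw [hsplit, abs_mul, abs_of_nonneg (by positivity)]
    _ ≤ c ^ 2 * (t ^ 2 / (1 - y)) := by
        gcongr
        exact hlog.trans (div_le_div_of_nonneg_left (sq_nonneg t) (by linarith) (by linarith))
    _ = y ^ 2 / (1 - y) / c ^ 2 := by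
        rw [ht]
        field_simp

lemma summable_tripleLogFactor_comp (hy0 : 0 ≤ y) (hy : y < 1) {c : ℕ → ℝ}
    (hc : ∀ n : ℕ, (n : ℝ) + 1 ≤ c n) : Summable fun n => tripleLogFactor y (c n) := by
  have hinv : Summable fun n : ℕ => 1 / ((n : ℝ) + 1) ^ 2 := by
    simpa using (summable_nat_add_iff 1).mpr (Real.summable_one_div_nat_pow.mpr one_lt_two)
  refine .of_norm_bounded (hinv.mul_left (y ^ 2 / (1 - y))) fun n => ?_
  have hn : (1 : ℝ) ≤ (n : ℝ) + 1 := by simp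
  calc ‖tripleLogFactor y (c n)‖ ≤ y ^ 2 / (1 - y) / c n ^ 2 :=
        abs_tripleLogFactor_le hy0 hy (hn.trans (hc n))
    _ ≤ y ^ 2 / (1 - y) / ((n : ℝ) + 1) ^ 2 := by
        have : 0 ≤ y ^ 2 / (1 - y) := div_nonneg (sq_nonneg y) (by linarith)
        gcongr
        exact hc n
    _ = y ^ 2 / (1 - y) * (1 / ((n : ℝ) + 1) ^ 2) := by ring

lemma summable_tripleLogFactor_two_mul_add (hy0 : 0 ≤ y) (hy : y < 1) {a : ℝ} (ha : 1 ≤ a) :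
    Summable fun n : ℕ => tripleLogFactor y (2 * n + a) :=
  summable_tripleLogFactor_comp hy0 hy fun n => by linarith [n.cast_nonneg (α := ℝ)]

end TripleLogFactor

lemma sum_Icc_two_mul_neg_one_pow_mul {R : Type*} [CommRing R] (f : ℕ → R) (N : ℕ) :
    ∑ k ∈ Icc 1 (2 * N), (-1) ^ (k + 1) * f k = ∑ n ∈ range N, (f (2 * n + 1) - f (2 * n + 2)) := by
  induction N with
  | zero => simp
  | succ N ih =>
    rw [show 2 * (N + 1) = 2 * N + 1 + 1 by ring, sum_Icc_succ_top (by omega),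
      sum_Icc_succ_top (by omega), ih, sum_range_succ]
    simp only [pow_succ, pow_mul]
    ring

lemma C3_eq_exp {x : ℝ} (hx : 4 * x ^ 2 < 1) :
    C3 x = exp ((∑' n : ℕ, tripleLogFactor (4 * x ^ 2) (2 * n + 1)) / 4) := by
  have hsum := summable_tripleLogFactor_two_mul_add (by positivity) hx le_rfl
  rw [C3, ← (hsum.hasSum.div_const 4).rexp.tprod_eq]
  refine tprod_congr fun n => ?_
  have hb := one_sub_div_sq_pos hx (by simp : (1 : ℝ) ≤ 2 * n + 1)
  simp only [Function.comp_apply, tripleLogFactor, rpow_def_of_pos hb, ← exp_add]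
  ring_nf

lemma S3_eq_exp {x : ℝ} (hx : x ^ 2 < 1) :
    S3 x = exp (x ^ 2 / 2 + ∑' n : ℕ, tripleLogFactor (x ^ 2) (n + 1)) := by
  have hsum := summable_tripleLogFactor_comp (sq_nonneg x) hx (c := fun n : ℕ => (n : ℝ) + 1)
    fun n => le_rfl
  rw [S3, exp_add, ← hsum.hasSum.rexp.tprod_eq]
  congr 1
  refine tprod_congr fun n => ?_
  have hb := one_sub_div_sq_pos hx (by simp : (1 : ℝ) ≤ ((n + 1 : ℕ) : ℝ))
  simpa using (exp_tripleLogFactor_natCast hb).symm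

lemma En_eq_exp {x : ℝ} (hx : 4 * x ^ 2 < 1) (N : ℕ) :
    En x N = exp (∑ n ∈ range N,
      (tripleLogFactor (4 * x ^ 2) (2 * n + 1) - tripleLogFactor (4 * x ^ 2) (2 * n + 2))) := by
  have hfactor : ∀ k ∈ Icc 1 (2 * N),
      (exp (4 * x ^ 2) * (1 - 4 * x ^ 2 / (k : ℝ) ^ 2) ^ (k ^ 2)) ^ ((-1 : ℤ) ^ (k + 1))
        = exp ((-1) ^ (k + 1) * tripleLogFactor (4 * x ^ 2) k) := by
    intro k hk
    have hb := one_sub_div_sq_pos hx (by exact_mod_cast (mem_Icc.mp hk).1 : (1 : ℝ) ≤ k)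
    rw [← exp_tripleLogFactor_natCast hb, ← rpow_intCast, ← exp_mul, mul_comm]
    push_cast
    rfl
  rw [En, prod_congr rfl hfactor, ← exp_sum, sum_Icc_two_mul_neg_one_pow_mul]
  push_cast
  rfl

theorem adamchik_E_eq_C3 (x : ℝ) (hx : |x| < 1 / 2) :
    Tendsto (En x) atTop (𝓝 (Real.exp (2 * x ^ 2) * (C3 x) ^ 8 / S3 (2 * x))) := by
  have hy : 4 * x ^ 2 < 1 := by nlinarith [sq_abs x, abs_nonneg x]
  have hsq : (2 * x) ^ 2 = 4 * x ^ 2 := by ring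
  have hodd := summable_tripleLogFactor_two_mul_add (by positivity) hy le_rfl
  have heven := summable_tripleLogFactor_two_mul_add (by positivity) hy one_le_two
  have hshifted : HasSum (fun n : ℕ => tripleLogFactor (4 * x ^ 2) (n + 1))
      ((∑' n : ℕ, tripleLogFactor (4 * x ^ 2) (2 * n + 1)) +
        ∑' n : ℕ, tripleLogFactor (4 * x ^ 2) (2 * n + 2)) :=
    HasSum.even_add_odd (by convert hodd.hasSum using 3; push_cast; ring)
      (by convert heven.hasSum using 3; push_cast; ring)
  have hval : Real.exp (2 * x ^ 2) * (C3 x) ^ 8 / S3 (2 * x) =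
      exp ((∑' n : ℕ, tripleLogFactor (4 * x ^ 2) (2 * n + 1)) -
        ∑' n : ℕ, tripleLogFactor (4 * x ^ 2) (2 * n + 2)) := by
    rw [C3_eq_exp hy, S3_eq_exp (hsq ▸ hy), hsq, hshifted.tsum_eq, ← exp_nat_mul, ← exp_add,
      ← exp_sub]
    ring_nf
  rw [hval, funext (En_eq_exp hy)]
  exact (continuous_exp.tendsto _).comp (hodd.hasSum.sub heven.hasSum).tendsto_sum_nat
end

section
/- Holcombe's identity: π = e^(3/2) · ∏_{n≥2} ( e·(1 - 1/n²)^(n²) ). -/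
/-!
Taking logarithms, the factor for `m ≥ 2` becomes `1 + m² (log (m - 1) + log (m + 1) - 2 log m)`.
These telescope: each `log k` in the interior of the range gets the coefficient
`(k + 1)² - 2 k² + (k - 1)² = 2`, so the partial sums are `2 log N!` plus explicit boundary terms.
Stirling's formula turns them into `log π + (M² log (1 + 1/M) - M) - 1` with `M = N + 1`, and the
second-order expansion of `log (1 + x)` shows that `M² log (1 + 1/M) - M → -1/2`.
-/

open Filter Real Topology Finset

open scoped Nat

lemma abs_log_one_add_sub_le {x : ℝ} (hx : |x| < 1) :
    |log (1 + x) - x + x ^ 2 / 2| ≤ |x| ^ 3 / (1 - |x|) := by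
  have h := abs_log_sub_add_sum_range_le (x := -x) (by rwa [abs_neg]) 2
  rw [abs_neg, sub_neg_eq_add] at h
  convert h using 2
  simp only [sum_range_succ, sum_range_zero]
  ring

lemma tendsto_sq_mul_log_one_add_inv_sub_self :
    Tendsto (fun t : ℝ => t ^ 2 * log (1 + t⁻¹) - t) atTop (𝓝 (-(1 / 2))) := by
  rw [← tendsto_sub_nhds_zero_iff]
  have hbound : Tendsto (fun t : ℝ => (t - 1)⁻¹) atTop (𝓝 0) :=
    tendsto_inv_atTop_zero.comp (tendsto_atTop_add_const_right _ (-1) tendsto_id)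
  refine squeeze_zero_norm' ?_ hbound
  filter_upwards [eventually_ge_atTop 2] with t ht
  have ht0 : 0 < t := by linarith
  have habs : |t⁻¹| = t⁻¹ := abs_of_pos (inv_pos.2 ht0)
  have hexpansion := abs_log_one_add_sub_le (habs ▸ inv_lt_one_of_one_lt₀ (by linarith))
  rw [habs] at hexpansion
  have hfactor : t ^ 2 * log (1 + t⁻¹) - t - -(1 / 2) =
      t ^ 2 * (log (1 + t⁻¹) - t⁻¹ + t⁻¹ ^ 2 / 2) := by
    field_simp
    ring
  rw [Real.norm_eq_abs, hfactor, abs_mul, abs_of_pos (pow_pos ht0 2)]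
  calc t ^ 2 * |log (1 + t⁻¹) - t⁻¹ + t⁻¹ ^ 2 / 2| ≤ t ^ 2 * (t⁻¹ ^ 3 / (1 - t⁻¹)) := by gcongr
    _ = (t - 1)⁻¹ := by
        have : t - 1 ≠ 0 := by linarith
        field_simp

lemma one_add_mul_log_one_sub_inv_nonpos {t : ℝ} (ht : 1 < t) :
    1 + t * log (1 - 1 / t) ≤ 0 := by
  have ht0 : 0 < t := by linarith
  have hlog : log (1 - 1 / t) ≤ -(1 / t) := by
    have := log_le_sub_one_of_pos (x := 1 - 1 / t) (by rw [sub_pos, div_lt_one ht0]; exact ht)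
    linarith
  calc 1 + t * log (1 - 1 / t) ≤ 1 + t * -(1 / t) := by gcongr
    _ = 0 := by field_simp; ring

lemma exp_one_add_mul_log {x : ℝ} (hx : 0 < x) (k : ℕ) :
    exp (1 + k * log x) = exp 1 * x ^ k := by
  rw [exp_add, ← log_pow, exp_log (pow_pos hx k)]

lemma tendsto_two_mul_log_stirlingSeq :
    Tendsto (fun n => 2 * log (Stirling.stirlingSeq n)) atTop (𝓝 (log π)) := by
  have h := ((continuousAt_log (sqrt_pos.2 pi_pos).ne').tendsto.comp
    Stirling.tendsto_stirlingSeq_sqrt_pi).const_mul 2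
  rwa [log_sqrt pi_pos.le, mul_div_cancel₀ _ two_ne_zero] at h

noncomputable def holcombeLogFactor (n : ℕ) : ℝ :=
  1 + ((n : ℝ) + 2) ^ 2 * log (1 - 1 / ((n : ℝ) + 2) ^ 2)

lemma holcombeLogFactor_nonpos (n : ℕ) : holcombeLogFactor n ≤ 0 :=
  one_add_mul_log_one_sub_inv_nonpos (by nlinarith [(n.cast_nonneg : (0 : ℝ) ≤ n)])

lemma exp_holcombeLogFactor (n : ℕ) :
    exp (holcombeLogFactor n) = exp 1 * (1 - 1 / ((n : ℝ) + 2) ^ 2) ^ ((n + 2) ^ 2) := by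
  have hpos : 0 < 1 - 1 / ((n : ℝ) + 2) ^ 2 := by
    rw [sub_pos, div_lt_one (by positivity)]
    nlinarith [(n.cast_nonneg : (0 : ℝ) ≤ n)]
  rw [← exp_one_add_mul_log hpos, holcombeLogFactor]
  push_cast
  rfl

lemma sum_range_holcombeLogFactor (N : ℕ) :
    ∑ n ∈ range N, holcombeLogFactor n =
      N + 2 * log (N + 1)! - log 2 - ((N : ℝ) + 2) ^ 2 * log ((N : ℝ) + 1)
        + ((N : ℝ) + 1) ^ 2 * log ((N : ℝ) + 2) := by
  induction N with
  | zero => simp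
  | succ N ih =>
    have hfactor : (1 : ℝ) - 1 / ((N : ℝ) + 2) ^ 2 =
        ((N : ℝ) + 1) * ((N : ℝ) + 3) / ((N : ℝ) + 2) ^ 2 := by
      field_simp
      ring
    rw [sum_range_succ, ih, holcombeLogFactor, hfactor, Nat.factorial_succ (N + 1), Nat.cast_mul,
      log_div (by positivity) (by positivity), log_mul (by positivity) (by positivity),
      log_mul (by positivity) (by positivity), log_pow]
    push_cast
    rw [show (N : ℝ) + 1 + 1 = N + 2 by ring, show (N : ℝ) + 1 + 2 = N + 3 by ring]
    ring

lemma sum_range_holcombeLogFactor_eq_log_stirlingSeq (N : ℕ) :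
    ∑ n ∈ range N, holcombeLogFactor n =
      2 * log (Stirling.stirlingSeq (N + 1))
        + (((N : ℝ) + 1) ^ 2 * log (1 + ((N : ℝ) + 1)⁻¹) - ((N : ℝ) + 1)) - 1 := by
  have hratio : 1 + ((N : ℝ) + 1)⁻¹ = ((N : ℝ) + 2) / ((N : ℝ) + 1) := by
    field_simp
    ring
  rw [sum_range_holcombeLogFactor, Stirling.log_stirlingSeq_formula]
  push_cast
  rw [hratio, log_div (by positivity) (exp_ne_zero 1), log_exp,
    log_div (by positivity) (by positivity), log_mul two_ne_zero (by positivity)]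
  ring

lemma tendsto_sum_range_holcombeLogFactor :
    Tendsto (fun N => ∑ n ∈ range N, holcombeLogFactor n) atTop (𝓝 (log π - 3 / 2)) := by
  have hshift : Tendsto (fun N : ℕ => (N : ℝ) + 1) atTop atTop :=
    tendsto_atTop_add_const_right _ 1 tendsto_natCast_atTop_atTop
  have h := ((tendsto_two_mul_log_stirlingSeq.comp (tendsto_add_atTop_nat 1)).add
    (tendsto_sq_mul_log_one_add_inv_sub_self.comp hshift)).sub_const 1
  convert h using 2 with N
  · exact sum_range_holcombeLogFactor_eq_log_stirlingSeq N
  · ring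

-- The terms have a constant sign, so convergence of the partial sums is already unconditional.
lemma hasSum_holcombeLogFactor : HasSum holcombeLogFactor (log π - 3 / 2) := by
  have hneg := (hasSum_iff_tendsto_nat_of_nonneg
    (fun n => neg_nonneg.2 (holcombeLogFactor_nonpos n)) _).2
    (by simpa only [sum_neg_distrib] using tendsto_sum_range_holcombeLogFactor.neg)
  simpa only [neg_neg] using hneg.neg

theorem holcombe_product :
    π = Real.exp (3 / 2) *
      ∏' n : ℕ, (Real.exp 1 * (1 - 1 / ((n : ℝ) + 2) ^ 2) ^ ((n + 2) ^ 2)) := by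
  have h := hasSum_holcombeLogFactor.rexp
  simp only [Function.comp_def, exp_holcombeLogFactor, exp_sub, exp_log pi_pos] at h
  rw [h.tprod_eq, mul_div_cancel₀ _ (exp_ne_zero _)]
end

section
/- S₂(1/2) = √2, where S₂(z) := e^z · ∏_{n≥1} ( ((1 - z/n)/(1 + z/n))^n · e^(2z) ). -/
open Filter Real Topology Finset

/-! At `z = 1/2` the `n`-th factor is `((2n+1)/(2n+3))^(n+1) · e`, and the partial products
telescope to `(2N)!/N! · (e/(2(2N+1)))^N`. Stirling's formula rewrites this as
`√2 · (2N/(2N+1))^N` up to a factor tending to `1`, so the partial products tend to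
`√2 · e^(-1/2)`, which the prefactor `e^(1/2)` cancels. Since `log (1 + 1/a) ≥ 2/(2a+1)`,
every factor lies in `(0, 1]`, so the (unconditional) product converges as soon as its partial
products do. -/

lemma hasProd_of_tendsto_prod_range_of_le_one {f : ℕ → ℝ} (hpos : ∀ n, 0 < f n)
    (hle : ∀ n, f n ≤ 1) {a : ℝ} (ha : 0 < a)
    (h : Tendsto (fun N ↦ ∏ n ∈ range N, f n) atTop (𝓝 a)) :
    HasProd f a := by
  have hsum : HasSum (fun n ↦ -log (f n)) (-log a) := by
    rw [hasSum_iff_tendsto_nat_of_nonneg fun n ↦ neg_nonneg.2 (log_nonpos (hpos n).le (hle n))]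
    refine ((continuousAt_log ha.ne').tendsto.comp h).neg.congr fun N ↦ ?_
    simp [log_prod fun n _ ↦ (hpos n).ne']
  have := hasProd_of_hasSum_log hpos (by simpa using hsum.neg)
  rwa [exp_log ha] at this

lemma two_div_le_log_one_add_inv {a : ℝ} (ha : 0 < a) : 2 / (2 * a + 1) ≤ log (1 + a⁻¹) := by
  simpa [div_eq_mul_inv] using le_hasSum (hasSum_log_one_add_inv ha) 0 fun k _ ↦ by positivity

open Nat in
lemma factorial_two_mul_div_factorial_eq_stirlingSeq {N : ℕ} (hN : N ≠ 0) :
    ((2 * N)! / N ! : ℝ) =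
      Stirling.stirlingSeq (2 * N) / Stirling.stirlingSeq N * √2 * (4 * N / exp 1) ^ N := by
  have hsqrt : √(2 * ((2 * N : ℕ) : ℝ)) = √2 * √(2 * N) := by
    rw [← sqrt_mul zero_le_two]; push_cast; ring_nf
  have hN' : (0 : ℝ) < N := by positivity
  simp only [Stirling.stirlingSeq, hsqrt]
  field_simp
  rw [pow_mul, ← mul_pow]
  push_cast
  ring

noncomputable def s2HalfFactor (n : ℕ) : ℝ := ((2 * n + 1) / (2 * n + 3)) ^ (n + 1) * exp 1

lemma s2HalfFactor_pos (n : ℕ) : 0 < s2HalfFactor n := by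
  unfold s2HalfFactor; positivity

lemma s2HalfFactor_le_one (n : ℕ) : s2HalfFactor n ≤ 1 := by
  have key := two_div_le_log_one_add_inv (a := (2 * n + 1) / 2) (by positivity)
  have hlog : log (1 + ((2 * n + 1) / 2 : ℝ)⁻¹) = -log ((2 * n + 1) / (2 * n + 3)) := by
    rw [← log_inv]; congr 1; field_simp; ring
  have hlhs : (2 / (2 * ((2 * n + 1) / 2) + 1) : ℝ) = 1 / (n + 1) := by field_simp; ring
  rw [hlog, hlhs, div_le_iff₀ (by positivity)] at key
  rw [← log_nonpos_iff (s2HalfFactor_pos n).le, s2HalfFactor,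
    log_mul (by positivity) (by positivity), log_pow, log_exp]
  push_cast
  linarith

open Nat in
lemma prod_range_s2HalfFactor (N : ℕ) :
    ∏ n ∈ range N, s2HalfFactor n = (2 * N)! / N ! * (exp 1 / (2 * (2 * N + 1))) ^ N := by
  induction N with
  | zero => simp
  | succ N ih =>
    rw [prod_range_succ, ih, s2HalfFactor, show 2 * (N + 1) = 2 * N + 1 + 1 by ring,
      factorial_succ, factorial_succ, factorial_succ]
    push_cast
    simp only [div_pow, mul_pow]
    field_simp
    ring

lemma tendsto_two_mul_div_two_mul_add_one_pow :
    Tendsto (fun N : ℕ ↦ (2 * N / (2 * N + 1) : ℝ) ^ N) atTop (𝓝 (exp (1 / 2))⁻¹) := by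
  refine ((tendsto_one_add_div_pow_exp (1 / 2)).inv₀ (exp_ne_zero _)).congr' ?_
  filter_upwards [eventually_ne_atTop 0] with N hN
  have hN' : (0 : ℝ) < N := by positivity
  rw [← inv_pow]
  congr 1
  field_simp

lemma tendsto_prod_range_s2HalfFactor :
    Tendsto (fun N ↦ ∏ n ∈ range N, s2HalfFactor n) atTop (𝓝 (√2 * (exp (1 / 2))⁻¹)) := by
  have hratio : Tendsto (fun N ↦ Stirling.stirlingSeq (2 * N) / Stirling.stirlingSeq N) atTop
      (𝓝 1) := by
    rw [← div_self (sqrt_pos.2 pi_pos).ne']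
    exact (Stirling.tendsto_stirlingSeq_sqrt_pi.comp (tendsto_id.const_mul_atTop' two_pos)).div
      Stirling.tendsto_stirlingSeq_sqrt_pi (sqrt_pos.2 pi_pos).ne'
  have := (hratio.mul_const √2).mul tendsto_two_mul_div_two_mul_add_one_pow
  rw [one_mul] at this
  refine this.congr' ?_
  filter_upwards [eventually_ne_atTop 0] with N hN
  have hN' : (0 : ℝ) < N := by positivity
  have hpow : (4 * N / exp 1) ^ N * (exp 1 / (2 * (2 * N + 1))) ^ N =
      (2 * N / (2 * N + 1)) ^ N := by
    rw [← mul_pow]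
    congr 1
    field_simp
    ring
  rw [prod_range_s2HalfFactor, factorial_two_mul_div_factorial_eq_stirlingSeq hN,
    mul_assoc _ (_ ^ N), hpow, mul_assoc]

theorem S2_half : S2 (1 / 2) = Real.sqrt 2 := by
  have hfactor : (fun n : ℕ ↦ ((1 - 1 / 2 / (n + 1)) / (1 + 1 / 2 / (n + 1))) ^ (n + 1) *
      exp (2 * (1 / 2))) = s2HalfFactor := by
    funext n
    rw [s2HalfFactor]
    congr 2
    · field_simp
      ring
    · norm_num
  have hprod := hasProd_of_tendsto_prod_range_of_le_one s2HalfFactor_pos s2HalfFactor_le_one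
    (by positivity) tendsto_prod_range_s2HalfFactor
  rw [S2, hfactor, hprod.tprod_eq]
  field_simp
end

section
/- For real t with 0 < t < 1, S₂(t) = exp(∫₀ᵗ π s cot(π s) ds), where S₂ is the Kurokawa double sine. -/
/-!
Mittag-Leffler gives `π s cot (π s) = 1 - ∑ 2 s² / (m² - s²)` for `0 < |s| < 1`, the sum over
`m ≥ 1`. The terms are bounded by `C / m²` uniformly on `[0, t]`, so the series may be integrated
termwise, and `∫₀ᵗ 2 s² / (m² - s²) ds = m log ((m + t) / (m - t)) - 2 t`. The exponential of
minus this antiderivative is exactly the `m`-th factor `((1 - t/m) / (1 + t/m))^m e^{2t}` of `S₂`.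
-/

open Filter Real Topology Finset

open MeasureTheory
open scoped Interval

theorem hasSum_one_sub_pi_mul_cot {x : ℝ} (hx : ∀ n : ℤ, x ≠ n) :
    HasSum (fun n : ℕ => 2 * x ^ 2 / ((n + 1) ^ 2 - x ^ 2)) (1 - π * x * cot (π * x)) := by
  have hz : (x : ℂ) ∈ Complex.integerComplement := by
    rintro ⟨n, hn⟩
    exact hx n (by exact_mod_cast hn.symm)
  have hterm (n : ℕ) : ((2 * x ^ 2 / ((n + 1) ^ 2 - x ^ 2) : ℝ) : ℂ) = -x * cotTerm x n := by
    have h := Complex.integerComplement_pow_two_ne_pow_two hz (n + 1)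
    push_cast at h ⊢
    have hd : ((n : ℂ) + 1) ^ 2 - x ^ 2 ≠ 0 := sub_ne_zero.2 h.symm
    rw [cotTerm_identity hz,
      show ((x : ℂ) + (n + 1)) * (x - (n + 1)) = -((n + 1) ^ 2 - x ^ 2) by ring]
    field_simp
  have hval : ((1 - π * x * cot (π * x) : ℝ) : ℂ) = -x * (π * Complex.cot (π * x) - 1 / x) := by
    have hx0 : (x : ℂ) ≠ 0 := Complex.integerComplement.ne_zero hz
    push_cast [Complex.ofReal_cot]
    field_simp
    ring
  rw [← Complex.hasSum_ofReal, hval, cot_series_rep' hz]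
  simp_rw [hterm]
  exact (summable_cotTerm hz).hasSum.mul_left _

theorem hasSum_one_sub_pi_mul_cot_of_abs_lt_one {s : ℝ} (hs0 : s ≠ 0) (hs1 : |s| < 1) :
    HasSum (fun n : ℕ => 2 * s ^ 2 / ((n + 1) ^ 2 - s ^ 2)) (1 - π * s * cot (π * s)) := by
  refine hasSum_one_sub_pi_mul_cot fun n hn => ?_
  subst hn
  have hn1 : |n| < 1 := by exact_mod_cast hs1
  have hn0 : n ≠ 0 := by exact_mod_cast hs0
  have := abs_lt.1 hn1
  omega

theorem norm_two_mul_sq_div_sq_sub_sq_le {s r m : ℝ} (hs : |s| ≤ r) (hr : r < 1) (hm : 1 ≤ m) :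
    ‖2 * s ^ 2 / (m ^ 2 - s ^ 2)‖ ≤ 2 / ((1 - r ^ 2) * m ^ 2) := by
  have hs2 : s ^ 2 ≤ r ^ 2 := sq_le_sq' (abs_le.1 hs).1 (abs_le.1 hs).2
  have hr2 : r ^ 2 < 1 := by nlinarith [abs_nonneg s]
  have hm2 : 1 ≤ m ^ 2 := by nlinarith
  have hden : (1 - r ^ 2) * m ^ 2 ≤ m ^ 2 - s ^ 2 := by nlinarith
  have hpos : 0 < (1 - r ^ 2) * m ^ 2 := by positivity
  have hpos' : 0 < m ^ 2 - s ^ 2 := hpos.trans_le hden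
  rw [Real.norm_of_nonneg (by positivity), div_le_div_iff₀ hpos' hpos]
  nlinarith [sq_nonneg s]

theorem summable_two_div_mul_sq (c : ℝ) :
    Summable fun n : ℕ => 2 / (c * ((n : ℝ) + 1) ^ 2) := by
  have := ((summable_nat_add_iff 1).2 (summable_one_div_nat_pow.2 one_lt_two)).mul_left (2 / c)
  refine this.congr fun n => ?_
  push_cast
  rw [div_mul_div_comm, mul_one]

theorem abs_le_of_mem_uIoc_zero {s t : ℝ} (hs : s ∈ Ι 0 t) : |s| ≤ |t| := by
  simpa using Set.abs_sub_left_of_mem_uIcc (Set.uIoc_subset_uIcc hs)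

theorem integral_two_mul_sq_div_sq_sub_sq {m t : ℝ} (ht : |t| < m) :
    ∫ s in (0 : ℝ)..t, 2 * s ^ 2 / (m ^ 2 - s ^ 2) = m * (log (m + t) - log (m - t)) - 2 * t := by
  have hlt {s : ℝ} (hs : s ∈ Set.uIcc 0 t) : |s| < m := by
    simpa using (Set.abs_sub_left_of_mem_uIcc hs).trans_lt (by simpa using ht)
  have hderiv (s : ℝ) (hs : |s| < m) :
      HasDerivAt (fun y => m * (log (m + y) - log (m - y)) - 2 * y)
        (2 * s ^ 2 / (m ^ 2 - s ^ 2)) s := by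
    obtain ⟨h1, h2⟩ := abs_lt.1 hs
    have hp : m + s ≠ 0 := by linarith
    have hq : m - s ≠ 0 := by linarith
    refine (((((hasDerivAt_id s).const_add m).log hp).sub
      (((hasDerivAt_id s).const_sub m).log hq)).const_mul m).sub
      ((hasDerivAt_id s).const_mul 2) |>.congr_deriv ?_
    simp only [id]
    rw [show m ^ 2 - s ^ 2 = (m + s) * (m - s) by ring]
    field_simp
    ring
  rw [intervalIntegral.integral_eq_sub_of_hasDerivAt (fun s hs => hderiv s (hlt hs))]
  · simp
  · refine ContinuousOn.intervalIntegrable (ContinuousOn.div (by fun_prop) (by fun_prop) ?_)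
    intro s hs
    have := hlt hs
    nlinarith [sq_abs s, abs_nonneg s]

theorem intervalIntegrable_pi_mul_cot {t : ℝ} (ht : |t| < 1) :
    IntervalIntegrable (fun s => π * s * cot (π * s)) volume 0 t := by
  have hmeas : Measurable fun s => π * s * cot (π * s) := by
    simp_rw [cot_eq_cos_div_sin]
    fun_prop
  refine (intervalIntegrable_const
    (c := 1 + ∑' n : ℕ, 2 / ((1 - |t| ^ 2) * ((n : ℝ) + 1) ^ 2))).mono_fun'
    hmeas.aestronglyMeasurable ?_
  rw [EventuallyLE, ae_restrict_iff' measurableSet_uIoc]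
  filter_upwards [volume.ae_ne 0] with s hs0 hs
  have hst := abs_le_of_mem_uIoc_zero hs
  have := (hasSum_one_sub_pi_mul_cot_of_abs_lt_one hs0 (hst.trans_lt ht)).norm_le_of_bounded
    (summable_two_div_mul_sq _).hasSum fun n =>
      norm_two_mul_sq_div_sq_sub_sq_le hst ht (le_add_of_nonneg_left n.cast_nonneg)
  obtain ⟨h1, h2⟩ := abs_le.1 this
  exact abs_le.2 ⟨by linarith, by linarith⟩

theorem hasSum_integral_pi_mul_cot {t : ℝ} (ht : |t| < 1) :
    HasSum (fun n : ℕ => (n + 1) * (log (n + 1 + t) - log (n + 1 - t)) - 2 * t)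
      (t - ∫ s in (0 : ℝ)..t, π * s * cot (π * s)) := by
  have hn (n : ℕ) : 1 ≤ (n : ℝ) + 1 := le_add_of_nonneg_left n.cast_nonneg
  have h := intervalIntegral.hasSum_integral_of_dominated_convergence
    (F := fun (n : ℕ) (s : ℝ) => 2 * s ^ 2 / ((n + 1) ^ 2 - s ^ 2))
    (fun n _ => 2 / ((1 - |t| ^ 2) * ((n : ℝ) + 1) ^ 2))
    (fun n => (by fun_prop : Measurable _).aestronglyMeasurable)
    (fun n => ae_of_all _ fun s hs => norm_two_mul_sq_div_sq_sub_sq_le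
      (abs_le_of_mem_uIoc_zero hs) ht (hn n))
    (ae_of_all _ fun _ _ => summable_two_div_mul_sq _) intervalIntegrable_const
    (by filter_upwards [volume.ae_ne 0] with s hs0 hs
        exact hasSum_one_sub_pi_mul_cot_of_abs_lt_one hs0
          ((abs_le_of_mem_uIoc_zero hs).trans_lt ht))
  rwa [intervalIntegral.integral_sub intervalIntegrable_const (intervalIntegrable_pi_mul_cot ht),
    intervalIntegral.integral_const, smul_eq_mul, mul_one, sub_zero,
    funext fun n => integral_two_mul_sq_div_sq_sub_sq (ht.trans_le (hn n))] at h

theorem one_sub_div_div_one_add_div_pow_mul_exp {t : ℝ} {n : ℕ} (ht : |t| < n + 1) :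
    ((1 - t / (n + 1)) / (1 + t / (n + 1))) ^ (n + 1) * exp (2 * t)
      = exp (-((n + 1) * (log (n + 1 + t) - log (n + 1 - t)) - 2 * t)) := by
  obtain ⟨h1, h2⟩ := abs_lt.1 ht
  have hp : (0 : ℝ) < n + 1 + t := by linarith
  have hq : (0 : ℝ) < n + 1 - t := by linarith
  have hratio : (1 - t / (n + 1)) / (1 + t / (n + 1)) =
      exp (log (n + 1 - t) - log (n + 1 + t)) := by
    rw [exp_sub, exp_log hp, exp_log hq]
    field_simp
  rw [hratio, ← exp_nat_mul, ← exp_add]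
  push_cast
  congr 1
  ring

theorem S2_eq_exp_integral (t : ℝ) (ht0 : 0 < t) (ht1 : t < 1) :
    S2 t = Real.exp (∫ s in (0 : ℝ)..t, π * s * Real.cot (π * s)) := by
  have ht : |t| < 1 := abs_lt.2 ⟨by linarith, ht1⟩
  have hfactor (n : ℕ) := one_sub_div_div_one_add_div_pow_mul_exp (n := n)
    (ht.trans_le (le_add_of_nonneg_left n.cast_nonneg))
  have hprod := (hasSum_integral_pi_mul_cot ht).neg.rexp
  simp only [Function.comp_def] at hprod
  rw [S2, tprod_congr hfactor, hprod.tprod_eq, ← exp_add]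
  congr 1
  ring
end
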